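/- arXiv:2407.05259 — 3 statements merged into one kernel-verified Lean document; each statement's English description precedes it below -/
import Mathlib

section
/- Let T ≥ 3 be an integer and let t be an integer with 2 ≤ t ≤ T−1. Then δ_{t−1} > 0, δ_t > 0, δ_{t|t−1} > 0, and for all real numbers x₀, y, x_t, x_{t−1} the Gaussian density product identity G(a_t·x_{t−1} + b_t·y, δ_{t|t−1}; x_t) · G((1−m_{t−1})·x₀ + m_{t−1}·y, δ_{t−1}; x_{t−1}) = G(μ'_t, δ'_t; x_{t−1}) · G((1−m_t)·x₀ + m_t·y, δ_t; x_t) holds, where μ'_t = (δ_{t−1}/δ_t)·a_t·x_t + (1−m_{t−1})·(δ_{t|t−1}/δ_t)·x₀ + (m_{t−1} − m_t·(δ_{t−1}/δ_t)·a_t)·y and δ'_t = δ_{t|t−1}·δ_{t−1}/δ_t. (This is the statement that the reverse transition of the Brownian bridge diffusion process given x_t, x₀, y is the Gaussian N(μ'_t, δ'_t).) -/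
open Real

/-- The density of the real Gaussian distribution `N(μ, δ)`. -/
noncomputable def G (μ δ x : ℝ) : ℝ :=
  (2 * π * δ) ^ (-(1 / 2 : ℝ)) * Real.exp (-(x - μ) ^ 2 / (2 * δ))

/-- `m_t = t / T`. -/
noncomputable def mBB (T t : ℕ) : ℝ := (t : ℝ) / (T : ℝ)

/-- `δ_t = t (T - t) / T²`. -/
noncomputable def δBB (T t : ℕ) : ℝ := (t : ℝ) * ((T : ℝ) - (t : ℝ)) / (T : ℝ) ^ 2

/-- `a_t = (1 - m_t) / (1 - m_{t-1})`. -/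
noncomputable def aBB (T t : ℕ) : ℝ := (1 - mBB T t) / (1 - mBB T (t - 1))

/-- `b_t = m_t - a_t m_{t-1}`. -/
noncomputable def bBB (T t : ℕ) : ℝ := mBB T t - aBB T t * mBB T (t - 1)

/-- `δ_{t|t-1} = δ_t - δ_{t-1} a_t²`. -/
noncomputable def δcond (T t : ℕ) : ℝ := δBB T t - δBB T (t - 1) * aBB T t ^ 2

/-!
For a linear Gaussian model `x' ~ N(m, δ₂)`, `x | x' ~ N(a x' + c, δ₁)`, completing the square
in `x'` factors the joint density as the posterior `N(·, δ₁ δ₂ / δ)` of `x'` times the marginal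
`N(a m + c, δ)` of `x`, where `δ = δ₁ + a² δ₂`. The Brownian bridge is such a model with
`δ_{t|t-1} + a_t² δ_{t-1} = δ_t` (the definition of `δ_{t|t-1}`) and `a_t (1 - m_{t-1}) = 1 - m_t`
(the definition of `a_t`), so the marginal is the one of `x_t`; what remains is positivity of the
variances, read off the closed forms.
-/

theorem G_mul_G_affine {δ₁ δ₂ δ : ℝ} (hδ₁ : 0 < δ₁) (hδ₂ : 0 < δ₂) (a c m x x' : ℝ)
    (hδ : δ₁ + a ^ 2 * δ₂ = δ) :
    G (a * x' + c) δ₁ x * G m δ₂ x' =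
      G ((a * δ₂ * (x - c) + δ₁ * m) / δ) (δ₁ * δ₂ / δ) x' * G (a * m + c) δ x := by
  have hδpos : 0 < δ := hδ ▸ by positivity
  have hnormalizer : (2 * π * δ₁) ^ (-(1 / 2 : ℝ)) * (2 * π * δ₂) ^ (-(1 / 2 : ℝ)) =
      (2 * π * (δ₁ * δ₂ / δ)) ^ (-(1 / 2 : ℝ)) * (2 * π * δ) ^ (-(1 / 2 : ℝ)) := by
    rw [← mul_rpow (by positivity) (by positivity), ← mul_rpow (by positivity) (by positivity)]
    field_simp
  have hexponent : -(x - (a * x' + c)) ^ 2 / (2 * δ₁) + -(x' - m) ^ 2 / (2 * δ₂) =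
      -(x' - (a * δ₂ * (x - c) + δ₁ * m) / δ) ^ 2 / (2 * (δ₁ * δ₂ / δ)) +
        -(x - (a * m + c)) ^ 2 / (2 * δ) := by
    subst hδ
    field_simp
    ring
  simp only [G]
  calc _ = (2 * π * δ₁) ^ (-(1 / 2 : ℝ)) * (2 * π * δ₂) ^ (-(1 / 2 : ℝ)) *
        exp (-(x - (a * x' + c)) ^ 2 / (2 * δ₁) + -(x' - m) ^ 2 / (2 * δ₂)) := by
        rw [exp_add]; ring
    _ = _ := by rw [hnormalizer, hexponent, exp_add]; ring

theorem mBB_ne_one {T t : ℕ} (h : t ≠ T) : mBB T t ≠ 1 := by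
  rcases eq_or_ne T 0 with rfl | hT
  · simp [mBB]
  · rw [mBB, Ne, div_eq_one_iff_eq (by exact_mod_cast hT)]
    exact_mod_cast h

theorem δBB_pos {T t : ℕ} (ht : 0 < t) (htT : t < T) : 0 < δBB T t := by
  have h0 : (0 : ℝ) < t := by exact_mod_cast ht
  have h1 : (t : ℝ) < T := by exact_mod_cast htT
  exact div_pos (mul_pos h0 (sub_pos.2 h1)) (pow_pos (h0.trans h1) 2)

theorem aBB_mul_one_sub_mBB {T t : ℕ} (ht : 0 < t) (htT : t ≤ T) :
    aBB T t * (1 - mBB T (t - 1)) = 1 - mBB T t :=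
  div_mul_cancel₀ _ (sub_ne_zero.2 (mBB_ne_one (T := T) (t := t - 1) (by omega)).symm)

theorem δcond_eq {T t : ℕ} (ht : 0 < t) (htT : t ≤ T) :
    δcond T t = ((T : ℝ) - t) / (T * (T - t + 1)) := by
  have hT : (0 : ℝ) < T := by exact_mod_cast (show 0 < T by omega)
  have : (t : ℝ) ≤ T := by exact_mod_cast htT
  have : (T : ℝ) - (t - 1) ≠ 0 := by linarith
  have : (T : ℝ) - t + 1 ≠ 0 := by linarith
  unfold δcond δBB aBB mBB
  rw [Nat.cast_sub ht, Nat.cast_one]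
  field_simp
  ring

theorem δcond_pos {T t : ℕ} (ht : 0 < t) (htT : t < T) : 0 < δcond T t := by
  have : (t : ℝ) < T := by exact_mod_cast htT
  rw [δcond_eq ht htT.le]
  exact div_pos (by linarith) (mul_pos (by linarith) (by linarith))

theorem brownian_bridge_reverse_transition_general (T t : ℕ) (ht : 2 ≤ t)
    (ht' : t ≤ T - 1) :
    0 < δBB T (t - 1) ∧ 0 < δBB T t ∧ 0 < δcond T t ∧
    ∀ x₀ y xt xtm : ℝ,
      G (aBB T t * xtm + bBB T t * y) (δcond T t) xt *
        G ((1 - mBB T (t - 1)) * x₀ + mBB T (t - 1) * y) (δBB T (t - 1)) xtm =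
      G ((δBB T (t - 1) / δBB T t) * aBB T t * xt
            + (1 - mBB T (t - 1)) * (δcond T t / δBB T t) * x₀
            + (mBB T (t - 1) - mBB T t * (δBB T (t - 1) / δBB T t) * aBB T t) * y)
          (δcond T t * δBB T (t - 1) / δBB T t) xtm *
        G ((1 - mBB T t) * x₀ + mBB T t * y) (δBB T t) xt := by
  have hprev : 0 < δBB T (t - 1) := δBB_pos (by omega) (by omega)
  have hcur : 0 < δBB T t := δBB_pos (by omega) (by omega)
  have hcond : 0 < δcond T t := δcond_pos (by omega) (by omega)
  refine ⟨hprev, hcur, hcond, fun x₀ y xt xtm => ?_⟩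
  have hvar : δcond T t + aBB T t ^ 2 * δBB T (t - 1) = δBB T t := by unfold δcond; ring
  rw [G_mul_G_affine hcond hprev _ _ _ _ _ hvar]
  congr 2
  · unfold bBB δcond
    field_simp
    ring
  · unfold bBB
    linear_combination x₀ * aBB_mul_one_sub_mBB (T := T) (t := t) (by omega) (by omega)

/-- The reverse transition of the Brownian bridge diffusion process given `x_t, x₀, y`
is the Gaussian `N(μ'_t, δ'_t)`. -/
theorem brownian_bridge_reverse_transition (T t : ℕ) (hT : 3 ≤ T) (ht : 2 ≤ t)
    (ht' : t ≤ T - 1) :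
    0 < δBB T (t - 1) ∧ 0 < δBB T t ∧ 0 < δcond T t ∧
    ∀ x₀ y xt xtm : ℝ,
      G (aBB T t * xtm + bBB T t * y) (δcond T t) xt *
        G ((1 - mBB T (t - 1)) * x₀ + mBB T (t - 1) * y) (δBB T (t - 1)) xtm =
      G ((δBB T (t - 1) / δBB T t) * aBB T t * xt
            + (1 - mBB T (t - 1)) * (δcond T t / δBB T t) * x₀
            + (mBB T (t - 1) - mBB T t * (δBB T (t - 1) / δBB T t) * aBB T t) * y)
          (δcond T t * δBB T (t - 1) / δBB T t) xtm *
        G ((1 - mBB T t) * x₀ + mBB T t * y) (δBB T t) xt :=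
  brownian_bridge_reverse_transition_general T t ht ht'
end

section
/- Let T ≥ 2 be an integer, let t be an integer with 1 ≤ t ≤ T, and let x₀, y ∈ ℝ. Then the pushforward of the product measure (gaussianReal ((1−m_{t−1})·x₀ + m_{t−1}·y) δ_{t−1}) ⊗ (gaussianReal 0 δ_{t|t−1}) under the map (x, e) ↦ a_t·x + b_t·y + e equals gaussianReal ((1−m_t)·x₀ + m_t·y) δ_t. (This says the one-step forward kernel q(x_t | x_{t−1}, y) = N(a_t·x_{t−1} + b_t·y, δ_{t|t−1}) composed with the marginal at time t−1 reproduces the Brownian bridge marginal at time t.) -/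
open MeasureTheory ProbabilityTheory

/-! The marginals are `N((1 - m) x₀ + m y, m (1 - m))`, so the step is a statement about
`s = m_{t-1} ≤ u = m_t`. The affine image `a X + b y` of the time-`s` marginal is Gaussian with
variance `a² s (1 - s)`, adding the independent noise convolves Gaussians, and
`a (1 - s) = 1 - u` matches the means while `δ_{t|t-1}` is by construction the missing variance. -/

open scoped NNReal

lemma gaussianReal_prod_map_mul_add_add (μ ν a c : ℝ) (v w : ℝ≥0) :
    ((gaussianReal μ v).prod (gaussianReal ν w)).map (fun p : ℝ × ℝ => a * p.1 + c + p.2) =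
      gaussianReal (a * μ + c + ν) (.mk (a ^ 2) (sq_nonneg a) * v + w) := by
  have h_affine : (gaussianReal μ v).map (fun x => a * x + c) =
      gaussianReal (a * μ + c) (.mk (a ^ 2) (sq_nonneg a) * v) := by
    calc (gaussianReal μ v).map (fun x => a * x + c)
        = ((gaussianReal μ v).map (a * ·)).map (· + c) := by
          rw [Measure.map_map (by fun_prop) (by fun_prop)]; rfl
      _ = _ := by rw [gaussianReal_map_const_mul, gaussianReal_map_add_const]
  have h_comp : (fun p : ℝ × ℝ => a * p.1 + c + p.2) =
      (fun p : ℝ × ℝ => p.1 + p.2) ∘ Prod.map (fun x => a * x + c) id := rfl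
  rw [h_comp, ← Measure.map_map (by fun_prop) (by fun_prop),
    ← Measure.map_prod_map _ _ (by fun_prop) measurable_id, Measure.map_id, h_affine]
  exact gaussianReal_conv_gaussianReal

lemma bridge_cond_variance_nonneg {s u : ℝ} (hsu : s ≤ u) (hu : u ≤ 1) :
    0 ≤ u * (1 - u) - s * (1 - s) * ((1 - u) / (1 - s)) ^ 2 := by
  rcases hu.lt_or_eq with hu | rfl
  · have hs : 0 < 1 - s := by linarith
    have h_eq : u * (1 - u) - s * (1 - s) * ((1 - u) / (1 - s)) ^ 2 =
        (1 - u) * (u - s) / (1 - s) := by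
      field_simp
      ring
    rw [h_eq]
    exact div_nonneg (mul_nonneg (by linarith) (by linarith)) hs.le
  · simp

theorem gaussianReal_bridge_step {s u : ℝ} (hs : 0 ≤ s) (hsu : s ≤ u) (hu : u ≤ 1) (x₀ y : ℝ) :
    ((gaussianReal ((1 - s) * x₀ + s * y) (s * (1 - s)).toNNReal).prod
        (gaussianReal 0 (u * (1 - u) - s * (1 - s) * ((1 - u) / (1 - s)) ^ 2).toNNReal)).map
      (fun p : ℝ × ℝ => (1 - u) / (1 - s) * p.1 + (u - (1 - u) / (1 - s) * s) * y + p.2) =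
    gaussianReal ((1 - u) * x₀ + u * y) (u * (1 - u)).toNNReal := by
  -- At `s = 1` the coefficient is the junk value `0 / 0 = 0`, harmless since then `u = 1`.
  have h_coeff : (1 - u) / (1 - s) * (1 - s) = 1 - u :=
    div_mul_cancel_of_imp fun h => by linarith
  rw [gaussianReal_prod_map_mul_add_add]
  congr 1
  · linear_combination x₀ * h_coeff
  · apply NNReal.coe_injective
    push_cast
    rw [Real.coe_toNNReal _ (mul_nonneg hs (sub_nonneg.2 (hsu.trans hu))),
      Real.coe_toNNReal _ (bridge_cond_variance_nonneg hsu hu),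
      Real.coe_toNNReal _ (mul_nonneg (hs.trans hsu) (sub_nonneg.2 hu))]
    ring

lemma δBB_eq_mBB_mul_one_sub_mBB (T t : ℕ) : δBB T t = mBB T t * (1 - mBB T t) := by
  rcases eq_or_ne (T : ℝ) 0 with hT | hT
  · simp [δBB, mBB, hT]
  · unfold δBB mBB
    field_simp

lemma mBB_nonneg (T t : ℕ) : 0 ≤ mBB T t := by
  unfold mBB; positivity

lemma mBB_mono (T : ℕ) {s t : ℕ} (h : s ≤ t) : mBB T s ≤ mBB T t := by
  unfold mBB; gcongr

lemma mBB_le_one {T t : ℕ} (h : t ≤ T) : mBB T t ≤ 1 :=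
  div_le_one_of_le₀ (by exact_mod_cast h) (Nat.cast_nonneg T)

theorem brownian_bridge_one_step_forward_general (T t : ℕ) (ht2 : t ≤ T)
    (x₀ y : ℝ) :
    ((gaussianReal ((1 - mBB T (t - 1)) * x₀ + mBB T (t - 1) * y)
          (δBB T (t - 1)).toNNReal).prod
        (gaussianReal 0 (δcond T t).toNNReal)).map
      (fun p : ℝ × ℝ => aBB T t * p.1 + bBB T t * y + p.2) =
    gaussianReal ((1 - mBB T t) * x₀ + mBB T t * y) (δBB T t).toNNReal := by
  rw [δcond, δBB_eq_mBB_mul_one_sub_mBB, δBB_eq_mBB_mul_one_sub_mBB]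
  exact gaussianReal_bridge_step (mBB_nonneg T (t - 1)) (mBB_mono T (Nat.sub_le t 1))
    (mBB_le_one ht2) x₀ y

/-- The one-step forward kernel `q(x_t | x_{t-1}, y) = N(a_t x_{t-1} + b_t y, δ_{t|t-1})`
composed with the Brownian bridge marginal at time `t-1` reproduces the Brownian bridge
marginal at time `t`. -/
theorem brownian_bridge_one_step_forward (T t : ℕ) (hT : 2 ≤ T) (ht1 : 1 ≤ t) (ht2 : t ≤ T)
    (x₀ y : ℝ) :
    ((gaussianReal ((1 - mBB T (t - 1)) * x₀ + mBB T (t - 1) * y)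
          (δBB T (t - 1)).toNNReal).prod
        (gaussianReal 0 (δcond T t).toNNReal)).map
      (fun p : ℝ × ℝ => aBB T t * p.1 + bBB T t * y + p.2) =
    gaussianReal ((1 - mBB T t) * x₀ + mBB T t * y) (δBB T t).toNNReal :=
  brownian_bridge_one_step_forward_general T t ht2 x₀ y
end

section
/- There exists a universal constant C > 0 with the following property. Let d ≥ 1 and let λ₁, …, λ_d be positive real numbers with λ_i ≠ 1 for all i and Σ_i λ_i = d (the eigenvalues of a covariance matrix Σ with Tr(Σ) = d), and let κ = (max_i λ_i)/(min_i λ_i) be the condition number. Define f(u) = u − log(1+u), Ψ_T(T) = f(e^{−4T}·|Σ_i (λ_i − 1)·λ_i|) for T ≥ 0, and Ψ_Δ(Δt) = f(Δt·|Σ_i (1/λ_i − λ_i·log(λ_i)/(2(λ_i − 1)) + (1 − 1/λ_i)/3)|) for Δt > 0. Then for every ε > 0 there exist T > 0 and Δt > 0 such that (1/d)·(Ψ_T(T) + Ψ_Δ(Δt)) ≤ ε and T/Δt ≤ C·ε^{−2}·κ³. (Hence the number of sampling steps N = T/Δt needed to achieve error ε scales as O(ε^{−2} κ³).) -/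
/-!
Both error terms are bounded through `f(u) ≤ u`. Because the eigenvalues average to `1`, every
`λᵢ` and every `λᵢ⁻¹` is at most `κ`; hence the truncation coefficient `|∑ (λᵢ - 1) λᵢ|` is at
most `d κ`, and, since `λ log λ / (λ - 1)` lies between `1` and `λ`, the discretization
coefficient is at most `3 d κ`. Taking `T ≈ κ / ε` and `Δt ≈ ε / κ` makes each error term at most
`ε d / 2`, with `T / Δt = O(κ² / ε²)`.
-/

/-- `f(u) = u - log(1 + u)`, the function through which the discretization and truncation
errors of the reverse diffusion sampler are expressed. -/
noncomputable def fErr (u : ℝ) : ℝ := u - Real.log (1 + u)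

open Real Finset

lemma fErr_le_self {u : ℝ} (hu : 0 ≤ u) : fErr u ≤ u := by
  have := log_nonneg (by linarith : (1 : ℝ) ≤ 1 + u)
  unfold fErr
  linarith

lemma mul_log_div_sub_one_mem_Icc {l : ℝ} (h0 : 0 < l) (h1 : l ≠ 1) :
    l * log l / (l - 1) ∈ Set.Icc (min 1 l) (max 1 l) := by
  have hupper : l * log l ≤ l * (l - 1) :=
    mul_le_mul_of_nonneg_left (log_le_sub_one_of_pos h0) h0.le
  have hlower : l - 1 ≤ l * log l := by
    have := mul_le_mul_of_nonneg_left (one_sub_inv_le_log_of_pos h0) h0.le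
    rwa [mul_sub, mul_one, mul_inv_cancel₀ h0.ne'] at this
  rcases h1.lt_or_gt with hlt | hgt
  · have hneg : l - 1 < 0 := by linarith
    rw [min_eq_right hlt.le, max_eq_left hlt.le, Set.mem_Icc,
      le_div_iff_of_neg hneg, div_le_iff_of_neg hneg]
    constructor <;> linarith
  · have hpos : 0 < l - 1 := by linarith
    rw [min_eq_left hgt.le, max_eq_right hgt.le, Set.mem_Icc, le_div_iff₀ hpos, div_le_iff₀ hpos]
    constructor <;> linarith

lemma abs_discretization_term_le {l k : ℝ} (h0 : 0 < l) (h1 : l ≠ 1) (hk : 1 ≤ k)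
    (hlk : l ≤ k) (hik : l⁻¹ ≤ k) :
    |1 / l - l * log l / (2 * (l - 1)) + (1 - 1 / l) / 3| ≤ 3 * k := by
  obtain ⟨hmin, hmax⟩ := mul_log_div_sub_one_mem_Icc h0 h1
  have hhalf : l * log l / (2 * (l - 1)) = l * log l / (l - 1) / 2 := by
    rw [mul_comm 2, div_div]
  have hmin0 : 0 ≤ min 1 l := le_min zero_le_one h0.le
  have hmaxk : max 1 l ≤ k := max_le hk hlk
  have hinv0 : 0 ≤ l⁻¹ := inv_nonneg.mpr h0.le
  rw [hhalf, one_div, abs_le]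
  constructor <;> linarith

section ConditionNumber

variable {ι : Type*} [Fintype ι] [Nonempty ι] {lam : ι → ℝ}

noncomputable def condNum (lam : ι → ℝ) : ℝ := (⨆ i, lam i) / (⨅ i, lam i)

lemma ciInf_le_one_of_sum_le_card (hsum : ∑ i, lam i ≤ Fintype.card ι) : ⨅ i, lam i ≤ 1 := by
  obtain ⟨i, -, hi⟩ := exists_le_of_sum_le (f := lam) (g := fun _ => (1 : ℝ)) univ_nonempty
    (by simp [hsum])
  exact (ciInf_le (Set.finite_range lam).bddBelow i).trans hi

lemma one_le_ciSup_of_card_le_sum (hsum : Fintype.card ι ≤ ∑ i, lam i) : 1 ≤ ⨆ i, lam i := by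
  obtain ⟨i, -, hi⟩ := exists_le_of_sum_le (f := fun _ => (1 : ℝ)) (g := lam) univ_nonempty
    (by simp [hsum])
  exact le_ciSup_of_le (Set.finite_range lam).bddAbove i hi

lemma ciInf_pos_of_pos (hpos : ∀ i, 0 < lam i) : 0 < ⨅ i, lam i := by
  obtain ⟨i, hi⟩ := exists_eq_ciInf_of_finite (f := lam)
  exact hi ▸ hpos i

variable (hpos : ∀ i, 0 < lam i) (hsum : ∑ i, lam i = Fintype.card ι)
include hpos hsum

lemma le_condNum (i : ι) : lam i ≤ condNum lam := by
  have hm := ciInf_pos_of_pos hpos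
  rw [condNum, le_div_iff₀ hm]
  calc lam i * ⨅ j, lam j ≤ lam i * 1 :=
        mul_le_mul_of_nonneg_left (ciInf_le_one_of_sum_le_card hsum.le) (hpos i).le
    _ ≤ ⨆ j, lam j := by rw [mul_one]; exact le_ciSup (Set.finite_range lam).bddAbove i

lemma inv_le_condNum (i : ι) : (lam i)⁻¹ ≤ condNum lam := by
  have hm := ciInf_pos_of_pos hpos
  calc (lam i)⁻¹ ≤ (⨅ j, lam j)⁻¹ := inv_anti₀ hm (ciInf_le (Set.finite_range lam).bddBelow i)
    _ ≤ condNum lam := by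
      rw [condNum, div_eq_mul_inv]
      exact le_mul_of_one_le_left (inv_nonneg.mpr hm.le) (one_le_ciSup_of_card_le_sum hsum.ge)

lemma one_le_condNum : 1 ≤ condNum lam := by
  have i := Classical.arbitrary ι
  rcases le_total 1 (lam i) with h | h
  · exact h.trans (le_condNum hpos hsum i)
  · exact (one_le_inv₀ (hpos i)).mpr h |>.trans (inv_le_condNum hpos hsum i)

lemma abs_sum_sub_one_mul_le : |∑ i, (lam i - 1) * lam i| ≤ Fintype.card ι * condNum lam := by
  have hκ := one_le_condNum hpos hsum
  calc |∑ i, (lam i - 1) * lam i| ≤ ∑ i, |lam i - 1| * lam i := by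
        refine (abs_sum_le_sum_abs _ _).trans_eq (sum_congr rfl fun i _ => ?_)
        rw [abs_mul, abs_of_pos (hpos i)]
    _ ≤ ∑ i, condNum lam * lam i := by
        refine sum_le_sum fun i _ => mul_le_mul_of_nonneg_right ?_ (hpos i).le
        have := le_condNum hpos hsum i
        rw [abs_sub_le_iff]
        constructor <;> linarith [hpos i]
    _ = Fintype.card ι * condNum lam := by rw [← mul_sum, hsum, mul_comm]

lemma abs_sum_discretization_term_le (hne : ∀ i, lam i ≠ 1) :
    |∑ i, (1 / lam i - lam i * log (lam i) / (2 * (lam i - 1)) + (1 - 1 / lam i) / 3)|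
      ≤ Fintype.card ι * (3 * condNum lam) := by
  refine (abs_sum_le_sum_abs _ _).trans ?_
  simpa using sum_le_card_nsmul univ _ (3 * condNum lam) fun i _ =>
    abs_discretization_term_le (hpos i) (hne i) (one_le_condNum hpos hsum)
      (le_condNum hpos hsum i) (inv_le_condNum hpos hsum i)

end ConditionNumber

/-- The `+ 1`s keep `T` and `Δt` positive when a coefficient vanishes. -/
lemma exists_horizon_step {a b δ : ℝ} (ha : 0 ≤ a) (hb : 0 ≤ b) (hδ : 0 < δ) :
    ∃ T : ℝ, 0 < T ∧ ∃ Δt : ℝ, 0 < Δt ∧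
      fErr (exp (-(4 * T)) * a) + fErr (Δt * b) ≤ 2 * δ ∧
      T / Δt = (a + 1) * (b + 1) / (4 * δ ^ 2) := by
  refine ⟨(a + 1) / (4 * δ), by positivity, δ / (b + 1), by positivity, ?_, ?_⟩
  · have htrunc : exp (-(4 * ((a + 1) / (4 * δ)))) * a ≤ δ := by
      have hexp : 1 + (a + 1) / δ ≤ exp ((a + 1) / δ) := by
        linarith [add_one_le_exp ((a + 1) / δ)]
      rw [show 4 * ((a + 1) / (4 * δ)) = (a + 1) / δ by field_simp, exp_neg,
        inv_mul_le_iff₀ (exp_pos _)]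
      refine le_trans ?_ (mul_le_mul_of_nonneg_right hexp hδ.le)
      rw [add_mul, div_mul_cancel₀ _ hδ.ne']
      linarith
    have hstep : δ / (b + 1) * b ≤ δ := by
      rw [div_mul_eq_mul_div, div_le_iff₀ (by positivity)]
      nlinarith
    calc fErr (exp (-(4 * ((a + 1) / (4 * δ)))) * a) + fErr (δ / (b + 1) * b)
        ≤ exp (-(4 * ((a + 1) / (4 * δ)))) * a + δ / (b + 1) * b :=
          add_le_add (fErr_le_self (by positivity)) (fErr_le_self (by positivity))
      _ ≤ 2 * δ := by linarith
  · field_simp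

/-- The number of sampling steps `N = T/Δt` needed to achieve error `ε` for a Gaussian data
distribution with eigenvalues `λ₁, …, λ_d` (satisfying `Tr Σ = d`) and condition number `κ`
scales as `O(ε⁻² κ³)`. -/
theorem sampling_steps_bound :
    ∃ C : ℝ, 0 < C ∧
      ∀ d : ℕ, 1 ≤ d → ∀ lam : Fin d → ℝ,
        (∀ i, 0 < lam i) → (∀ i, lam i ≠ 1) → (∑ i, lam i = (d : ℝ)) →
        ∀ ε : ℝ, 0 < ε →
          ∃ T : ℝ, 0 < T ∧ ∃ Δt : ℝ, 0 < Δt ∧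
            (1 / (d : ℝ)) *
                (fErr (Real.exp (-(4 * T)) * |∑ i, (lam i - 1) * lam i|) +
                  fErr (Δt * |∑ i, (1 / lam i
                      - lam i * Real.log (lam i) / (2 * (lam i - 1))
                      + (1 - 1 / lam i) / 3)|)) ≤ ε ∧
            T / Δt ≤ C * ε ^ (-2 : ℤ) * ((⨆ i, lam i) / (⨅ i, lam i)) ^ 3 := by
  refine ⟨8, by norm_num, fun d hd lam hpos hne hsum ε hε => ?_⟩
  have : Nonempty (Fin d) := ⟨⟨0, hd⟩⟩
  have hsum' : ∑ i, lam i = Fintype.card (Fin d) := by simpa using hsum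
  have hd0 : (0 : ℝ) < d := by exact_mod_cast hd
  have hκ := one_le_condNum hpos hsum'
  have ha := abs_sum_sub_one_mul_le hpos hsum'
  have hb := abs_sum_discretization_term_le hpos hsum' hne
  rw [Fintype.card_fin] at ha hb
  generalize ha_def : |∑ i, (lam i - 1) * lam i| = a at ha ⊢
  generalize hb_def : |∑ i, (1 / lam i - lam i * log (lam i) / (2 * (lam i - 1))
    + (1 - 1 / lam i) / 3)| = b at hb ⊢
  have ha0 : 0 ≤ a := ha_def ▸ abs_nonneg _
  have hb0 : 0 ≤ b := hb_def ▸ abs_nonneg _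
  obtain ⟨T, hT, Δt, hΔt, herr, hratio⟩ :=
    exists_horizon_step ha0 hb0 (by positivity : 0 < ε * d / 2)
  refine ⟨T, hT, Δt, hΔt, ?_, ?_⟩
  · rw [one_div, inv_mul_le_iff₀ hd0]
    linarith
  · have hdκ : 1 ≤ d * condNum lam := one_le_mul_of_one_le_of_one_le (by exact_mod_cast hd) hκ
    calc T / Δt = (a + 1) * (b + 1) / (4 * (ε * d / 2) ^ 2) := hratio
      _ ≤ (2 * d * condNum lam) * (4 * d * condNum lam) / (4 * (ε * d / 2) ^ 2) := by
        gcongr <;> linarith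
      _ = 8 * ε ^ (-2 : ℤ) * condNum lam ^ 2 := by
        rw [zpow_neg, zpow_ofNat]
        field_simp
        ring
      _ ≤ 8 * ε ^ (-2 : ℤ) * condNum lam ^ 3 := by
        gcongr
        norm_num
end
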